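/- Let (P,·,[−,−]) be a Poisson algebra and (B,∘_B) a perm algebra. Then the tensor product P⊗B, equipped with the bilinear operations determined on pure tensors by (p⊗b)∘(q⊗c) = (p·q)⊗(b∘_B c) and (p⊗b)∗(q⊗c) = [p,q]⊗(b∘_B c), is a dual pre-Poisson algebra. -/

import Mathlib

open TensorProduct LinearMap

/-- The axioms of a dual pre-Poisson (DPP) algebra. -/
structure IsDPP {k A : Type*} [Field k] [AddCommGroup A] [Module k A]
    (c s : A →ₗ[k] A →ₗ[k] A) : Prop where
  perm_assoc : ∀ a b d : A, c a (c b d) = c (c a b) d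
  perm_comm : ∀ a b d : A, c (c a b) d = c (c b a) d
  leibniz : ∀ a b d : A, s a (s b d) = s (s a b) d + s b (s a d)
  comp1 : ∀ a b d : A, s (c a b) d = c a (s b d) + c b (s a d)
  comp2 : ∀ a b d : A, c (s a b) d = s a (c b d) - c b (s a d)
  comp3 : ∀ a b d : A, c (s a b) d = - c (s b a) d

/-- The axioms of a (not necessarily unital) Poisson algebra. -/
structure IsPoisson {k P : Type*} [Field k] [AddCommGroup P] [Module k P]
    (m br : P →ₗ[k] P →ₗ[k] P) : Prop where
  mul_comm : ∀ p q : P, m p q = m q p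
  mul_assoc : ∀ p q u : P, m p (m q u) = m (m p q) u
  br_antisymm : ∀ p q : P, br p q = - br q p
  jacobi : ∀ p q u : P, br p (br q u) + br q (br u p) + br u (br p q) = 0
  leibniz : ∀ p q u : P, br p (m q u) = m (br p q) u + m q (br p u)

/-!
Each of the six DPP identities is trilinear, so it suffices to check it on pure tensors. There it
splits as an identity of `P` (commutativity and associativity of `·`, the Jacobi identity in
Leibniz form, the Leibniz rule in either slot, antisymmetry) tensored with an identity of `B`;
the latter always holds because in a perm algebra `x ∘ (y ∘ z) = (x ∘ y) ∘ z = y ∘ (x ∘ z)`.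
-/
namespace IsPoisson

variable {k P : Type*} [Field k] [AddCommGroup P] [Module k P] {m br : P →ₗ[k] P →ₗ[k] P}

theorem leibniz_br (hP : IsPoisson m br) (p q u : P) :
    br p (br q u) = br (br p q) u + br q (br p u) := by
  have h := hP.jacobi p q u
  rw [hP.br_antisymm u p, map_neg, hP.br_antisymm u (br p q)] at h
  rw [← sub_eq_zero, ← h]
  abel

theorem leibniz_left (hP : IsPoisson m br) (p q u : P) :
    br (m p q) u = m p (br q u) + m q (br p u) := by
  rw [hP.br_antisymm, hP.leibniz, hP.mul_comm (br u p), hP.br_antisymm u p, hP.br_antisymm u q]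
  simp only [map_neg]
  abel

end IsPoisson

namespace TensorProduct

variable {k M N X : Type*} [CommSemiring k] [AddCommMonoid M] [Module k M]
  [AddCommMonoid N] [Module k N] [AddCommMonoid X] [Module k X]

theorem trilinear_ext_apply {f g : M ⊗[k] N →ₗ[k] M ⊗[k] N →ₗ[k] M ⊗[k] N →ₗ[k] X}
    (h : ∀ (p q u : M) (x y z : N),
      f (p ⊗ₜ x) (q ⊗ₜ y) (u ⊗ₜ z) = g (p ⊗ₜ x) (q ⊗ₜ y) (u ⊗ₜ z))
    (a b d : M ⊗[k] N) : f a b d = g a b d := by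
  have hfg : f = g := by
    ext p x q y u z
    exact h p q u x y z
  rw [hfg]

end TensorProduct

namespace LinearMap

variable {R U V W X Y : Type*} [CommSemiring R] [AddCommMonoid U] [Module R U]
  [AddCommMonoid V] [Module R V] [AddCommMonoid W] [Module R W] [AddCommMonoid X] [Module R X]
  [AddCommMonoid Y] [Module R Y]

def complBilin (c : U →ₗ[R] X →ₗ[R] Y) (s : V →ₗ[R] W →ₗ[R] X) :
    U →ₗ[R] V →ₗ[R] W →ₗ[R] Y :=
  (llcomp R W X Y ∘ₗ c).compl₂ s

@[simp]
theorem complBilin_apply (c : U →ₗ[R] X →ₗ[R] Y) (s : V →ₗ[R] W →ₗ[R] X) (a : U) (b : V) (d : W) :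
    c.complBilin s a b d = c a (s b d) :=
  rfl

end LinearMap

theorem stmt6_general {k P B : Type*} [Field k]
    [AddCommGroup P] [Module k P] [AddCommGroup B] [Module k B]
    (m br : P →ₗ[k] P →ₗ[k] P) (hP : IsPoisson m br)
    (cB : B →ₗ[k] B →ₗ[k] B)
    (hB : ∀ b c d : B, cB b (cB c d) = cB (cB b c) d ∧ cB (cB b c) d = cB (cB c b) d)
    (circ star : P ⊗[k] B →ₗ[k] P ⊗[k] B →ₗ[k] P ⊗[k] B)
    (hcirc : ∀ (p q : P) (b c : B),
      circ (p ⊗ₜ[k] b) (q ⊗ₜ[k] c) = (m p q) ⊗ₜ[k] (cB b c))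
    (hstar : ∀ (p q : P) (b c : B),
      star (p ⊗ₜ[k] b) (q ⊗ₜ[k] c) = (br p q) ⊗ₜ[k] (cB b c)) :
    IsDPP circ star := by
  have assoc (x y z : B) : cB x (cB y z) = cB (cB x y) z := (hB x y z).1
  have left_comm (x y z : B) : cB x (cB y z) = cB y (cB x z) := by
    rw [assoc, (hB x y z).2, ← assoc]
  constructor <;> intro a b d
  · simpa using trilinear_ext_apply (f := circ.complBilin circ) (g := circ.compr₂ circ)
      (fun p q u x y z => by simp [hcirc, hP.mul_assoc, assoc]) a b d
  · simpa using trilinear_ext_apply (f := circ.compr₂ circ) (g := circ.flip.compr₂ circ)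
      (fun p q u x y z => by simp [hcirc, hP.mul_comm p q, (hB x y z).2]) a b d
  · simpa using trilinear_ext_apply (f := star.complBilin star)
      (g := star.compr₂ star + (star.complBilin star).flip)
      (fun p q u x y z => by
        simp only [complBilin_apply, compr₂_apply, LinearMap.add_apply, flip_apply, hstar]
        rw [hP.leibniz_br, add_tmul, ← assoc, left_comm x y z]) a b d
  · simpa using trilinear_ext_apply (f := circ.compr₂ star)
      (g := circ.complBilin star + (circ.complBilin star).flip)
      (fun p q u x y z => by
        simp only [complBilin_apply, compr₂_apply, LinearMap.add_apply, flip_apply, hstar, hcirc]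
        rw [hP.leibniz_left, add_tmul, ← assoc, left_comm x y z]) a b d
  · refine eq_sub_of_add_eq ?_
    simpa using trilinear_ext_apply (f := star.compr₂ circ + (circ.complBilin star).flip)
      (g := star.complBilin circ)
      (fun p q u x y z => by
        simp only [complBilin_apply, compr₂_apply, LinearMap.add_apply, flip_apply, hstar, hcirc]
        rw [hP.leibniz, add_tmul, ← assoc, left_comm x y z]) a b d
  · refine eq_neg_of_add_eq_zero_left ?_
    simpa using trilinear_ext_apply (f := star.compr₂ circ + (star.compr₂ circ).flip) (g := 0)
      (fun p q u x y z => by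
        simp only [compr₂_apply, LinearMap.add_apply, flip_apply, LinearMap.zero_apply, hstar, hcirc]
        rw [hP.br_antisymm p q, map_neg, LinearMap.neg_apply, neg_tmul, (hB x y z).2,
          neg_add_cancel]) a b d

/-- The tensor product of a Poisson algebra `(P, ·, [−,−])` and a perm algebra
`(B, ∘_B)`, equipped with the operations determined on pure tensors by
`(p⊗b)∘(q⊗c) = (p·q)⊗(b∘_B c)` and `(p⊗b)∗(q⊗c) = [p,q]⊗(b∘_B c)`,
is a dual pre-Poisson algebra. -/
theorem stmt6 {k P B : Type*} [Field k] [CharZero k]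
    [AddCommGroup P] [Module k P] [AddCommGroup B] [Module k B]
    (m br : P →ₗ[k] P →ₗ[k] P) (hP : IsPoisson m br)
    (cB : B →ₗ[k] B →ₗ[k] B)
    (hB : ∀ b c d : B, cB b (cB c d) = cB (cB b c) d ∧ cB (cB b c) d = cB (cB c b) d)
    (circ star : P ⊗[k] B →ₗ[k] P ⊗[k] B →ₗ[k] P ⊗[k] B)
    (hcirc : ∀ (p q : P) (b c : B),
      circ (p ⊗ₜ[k] b) (q ⊗ₜ[k] c) = (m p q) ⊗ₜ[k] (cB b c))
    (hstar : ∀ (p q : P) (b c : B),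
      star (p ⊗ₜ[k] b) (q ⊗ₜ[k] c) = (br p q) ⊗ₜ[k] (cB b c)) :
    IsDPP circ star :=
  stmt6_general m br hP cB hB circ star hcirc hstar
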